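/- arXiv:1703.08785 — 3 statements merged into one kernel-verified Lean document; each statement's English description precedes it below -/
import Mathlib

section
/- Let $r \ge 0$ be an integer and let $f$ be an arithmetic function such that for every $\varepsilon > 0$ one has $\sum_{n \le x} f(n) = \sum_{j=0}^{r} c_j (\log x)^j + O(x^{-1/2+\varepsilon})$ for some constants $c_0, \ldots, c_r$. Then for every positive integer $k$ there exist constants $C_0, \ldots, C_{k+r}$ such that for every $\varepsilon > 0$, $\sum_{n \le x} f(n) (\log(x/n))^k = \sum_{\ell=0}^{k+r} C_\ell (\log x)^{\ell} + O(x^{-1/2+\varepsilon})$; moreover, for $\ell \in \{k, k+1, \ldots, k+r\}$ the constants are given explicitly by $C_\ell = c_{\ell - k} \Big( 1 + (\ell - k) \sum_{i=1}^{k} \frac{(-1)^i}{\ell - k + i} \binom{k}{i} \Big)$. -/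
/-!
Expanding `log (x / n) ^ k = (log x - log n) ^ k` binomially reduces everything to the sums
`A i x = ∑_{n ≤ x} f n (log n) ^ i` for `i ≤ k`. Write `∑_{n ≤ x} f n = P (log x) + E x` with
`P = ∑ c_j X ^ j`. Abel summation gives
`A i x = (log x) ^ i (P (log x) + E x) - ∫_1^x i (log t) ^ (i - 1) t⁻¹ (P (log t) + E t) dt`.
The polynomial part integrates exactly to `∑ c_j i / (i + j) (log x) ^ (i + j)`. Since
`E t = O(t ^ (-1/2 + ε))`, the integrand of the remainder part is `O(t ^ (-3/2 + ε))`, so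
`∫_1^x = ∫_1^∞ - ∫_x^∞` is a constant plus a tail `O(x ^ (-1/2 + ε))`. Collecting powers of
`log x`, the constants only reach degrees `< k`, and the coefficient of `(log x) ^ (k + j)` is
`c_j ∑_i (-1) ^ i (k choose i) (1 - i / (i + j))`.
-/

open Filter Finset MeasureTheory Asymptotics Real

lemma isBigO_rpow_rpow_atTop {a b : ℝ} (h : a ≤ b) :
    (fun x : ℝ => x ^ a) =O[atTop] fun x => x ^ b := by
  refine IsBigO.of_bound' ?_
  filter_upwards [eventually_ge_atTop 1] with x hx
  rw [norm_of_nonneg (rpow_nonneg (zero_le_one.trans hx) _),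
    norm_of_nonneg (rpow_nonneg (zero_le_one.trans hx) _)]
  exact rpow_le_rpow_of_exponent_le hx h

lemma isBigO_log_pow_rpow_atTop (m : ℕ) {s : ℝ} (hs : 0 < s) :
    (fun x : ℝ => log x ^ m) =O[atTop] fun x => x ^ s := by
  simpa only [rpow_natCast] using (isLittleO_log_rpow_rpow_atTop m hs).isBigO

lemma isBigO_integral_Ioi_of_isBigO_rpow {g : ℝ → ℝ} {b : ℝ} (hb : b < -1)
    (hg : g =O[atTop] fun t => t ^ b) :
    (fun x => ∫ t in Set.Ioi x, g t) =O[atTop] fun x => x ^ (b + 1) := by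
  obtain ⟨C, -, hC⟩ := hg.exists_pos
  obtain ⟨X, hX⟩ := eventually_atTop.1 (hC.bound.and (eventually_gt_atTop 0))
  refine IsBigO.of_bound (C / -(b + 1)) (eventually_atTop.2 ⟨X, fun x hx => ?_⟩)
  have hx0 : 0 < x := (hX x hx).2
  have hbound : ∀ t ∈ Set.Ioi x, ‖g t‖ ≤ C * t ^ b := fun t ht => by
    have ht0 : 0 < t := hx0.trans ht
    simpa only [norm_of_nonneg (rpow_nonneg ht0.le _)] using (hX t (hx.trans ht.le)).1
  calc ‖∫ t in Set.Ioi x, g t‖ ≤ ∫ t in Set.Ioi x, C * t ^ b :=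
        norm_integral_le_of_norm_le ((integrableOn_Ioi_rpow_of_lt hb hx0).const_mul C)
          ((ae_restrict_iff' measurableSet_Ioi).2 (.of_forall hbound))
    _ = C / -(b + 1) * ‖x ^ (b + 1)‖ := by
        rw [integral_const_mul, integral_Ioi_rpow_of_lt hb hx0,
          norm_of_nonneg (rpow_nonneg hx0.le _), neg_div, div_neg]
        ring

def IsBigOPowEps (a : ℝ) (g : ℝ → ℝ) : Prop :=
  ∀ ε > (0 : ℝ), g =O[atTop] fun x : ℝ => x ^ (a + ε)

namespace IsBigOPowEps

variable {a : ℝ} {g h : ℝ → ℝ}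

lemma congr' (hg : IsBigOPowEps a g) (hgh : g =ᶠ[atTop] h) : IsBigOPowEps a h :=
  fun ε hε => (hg ε hε).congr' hgh EventuallyEq.rfl

lemma add (hg : IsBigOPowEps a g) (hh : IsBigOPowEps a h) :
    IsBigOPowEps a fun x => g x + h x :=
  fun ε hε => (hg ε hε).add (hh ε hε)

lemma const_mul (hg : IsBigOPowEps a g) (b : ℝ) : IsBigOPowEps a fun x => b * g x :=
  fun ε hε => (hg ε hε).const_mul_left b

lemma sum {ι : Type*} {s : Finset ι} {g : ι → ℝ → ℝ} (hg : ∀ i ∈ s, IsBigOPowEps a (g i)) :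
    IsBigOPowEps a fun x => ∑ i ∈ s, g i x :=
  fun ε hε => IsBigO.fun_sum fun i hi => hg i hi ε hε

lemma log_pow_mul (hg : IsBigOPowEps a g) (m : ℕ) :
    IsBigOPowEps a fun x => log x ^ m * g x := fun ε hε =>
  IsBigO.mul_atTop_rpow_of_isBigO_rpow (ε / 2) (a + ε / 2) (a + ε)
    (isBigO_log_pow_rpow_atTop m (half_pos hε)) (hg _ (half_pos hε)) (by linarith)

lemma inv_mul (hg : IsBigOPowEps a g) : IsBigOPowEps (a - 1) fun x => x⁻¹ * g x :=
  fun ε hε => by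
    have hinv : (fun x : ℝ => x⁻¹) =O[atTop] fun x => x ^ (-1 : ℝ) :=
      (isBigO_refl _ _).congr' EventuallyEq.rfl (.of_forall fun x => (rpow_neg_one x).symm)
    exact IsBigO.mul_atTop_rpow_of_isBigO_rpow (-1) (a + ε) (a - 1 + ε) hinv (hg ε hε)
      (by linarith)

lemma integral_Ioi (hg : IsBigOPowEps (a - 1) g) (ha : a < 0) :
    IsBigOPowEps a fun x => ∫ t in Set.Ioi x, g t := fun ε hε => by
  set δ := min ε (-a / 2)
  have hδ : 0 < δ := lt_min hε (by linarith)
  refine (isBigO_integral_Ioi_of_isBigO_rpow ?_ (hg δ hδ)).trans (isBigO_rpow_rpow_atTop ?_)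
  · linarith [min_le_right ε (-a / 2)]
  · linarith [min_le_left ε (-a / 2)]

lemma integrableOn_Ioi {b : ℝ} (hg : IsBigOPowEps a g) (ha : a < -1)
    (hloc : LocallyIntegrableOn g (Set.Ici b)) : IntegrableOn g (Set.Ioi b) := by
  have hexp : a + (-1 - a) / 2 < -1 := by linarith
  exact (hloc.integrableOn_of_isBigO_atTop (hg _ (by linarith))
    (integrableAtFilter_rpow_atTop_iff.2 hexp)).mono_set Set.Ioi_subset_Ici_self

end IsBigOPowEps

lemma continuousOn_log_pow_deriv (i : ℕ) :
    ContinuousOn (fun t : ℝ => i * log t ^ (i - 1) * t⁻¹) {0}ᶜ :=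
  (continuousOn_const.mul (continuousOn_log.pow _)).mul continuousOn_inv₀

lemma hasDerivAt_div_mul_log_pow (i j : ℕ) {t : ℝ} (ht : t ≠ 0) :
    HasDerivAt (fun t => i / (j + i : ℝ) * log t ^ (j + i))
      (i * log t ^ (i - 1) * t⁻¹ * log t ^ j) t := by
  rcases i with _ | i
  · simpa using hasDerivAt_const t (0 : ℝ)
  · refine (((hasDerivAt_log ht).pow (j + (i + 1))).const_mul
      ((i + 1 : ℕ) / (j + (i + 1 : ℕ) : ℝ))).congr_deriv ?_
    rw [show j + (i + 1) - 1 = i + j by omega, Nat.add_sub_cancel, pow_add]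
    push_cast
    field_simp

lemma integral_log_pow_deriv_mul_sum (c : ℕ → ℝ) (r i : ℕ) {x : ℝ} (hx : 1 ≤ x) :
    ∫ t in (1)..x, i * log t ^ (i - 1) * t⁻¹ * ∑ j ∈ range (r + 1), c j * log t ^ j =
      ∑ j ∈ range (r + 1), c j * (i / (j + i)) * log x ^ (j + i) := by
  have hne : ∀ t ∈ Set.uIcc 1 x, t ≠ 0 := fun t ht =>
    (zero_lt_one.trans_le (Set.uIcc_of_le hx ▸ ht).1).ne'
  have hderiv : ∀ t ∈ Set.uIcc 1 x,
      HasDerivAt (fun t => ∑ j ∈ range (r + 1), c j * (i / (j + i)) * log t ^ (j + i))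
        (i * log t ^ (i - 1) * t⁻¹ * ∑ j ∈ range (r + 1), c j * log t ^ j) t := by
    intro t ht
    rw [mul_sum]
    refine HasDerivAt.fun_sum fun j _ => ?_
    have h := (hasDerivAt_div_mul_log_pow i j (hne t ht)).const_mul (c j)
    simp only [← mul_assoc] at h ⊢
    exact h.congr_deriv (by ring)
  have hcont : ContinuousOn
      (fun t => i * log t ^ (i - 1) * t⁻¹ * ∑ j ∈ range (r + 1), c j * log t ^ j) (Set.uIcc 1 x) :=
    ((continuousOn_log_pow_deriv i).mul (continuousOn_finsetSum _ fun j _ =>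
      continuousOn_const.mul (continuousOn_log.pow j))).mono hne
  rw [intervalIntegral.integral_eq_sub_of_hasDerivAt hderiv hcont.intervalIntegrable, log_one,
    sub_eq_self]
  refine sum_eq_zero fun j _ => ?_
  rcases (j + i).eq_zero_or_pos with h | h
  · simp [Nat.add_eq_zero_iff.1 h]
  · simp [zero_pow h.ne']

lemma sum_Icc_zero_ite_eq_sum_Icc_one {M : Type*} [AddCommMonoid M] (f : ℕ → M) (m : ℕ) :
    ∑ n ∈ Icc 0 m, (if n = 0 then 0 else f n) = ∑ n ∈ Icc 1 m, f n := by
  rw [← add_sum_Ioc_eq_sum_Icc m.zero_le, if_pos rfl, zero_add,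
    ← Finset.Icc_add_one_left_eq_Ioc, zero_add]
  exact sum_congr rfl fun n hn => if_neg (by simp at hn; omega)

lemma sum_mul_log_pow_eq_sub_integral (f : ℕ → ℝ) (i : ℕ) {x : ℝ} (hx : 1 ≤ x) :
    ∑ n ∈ Icc 1 ⌊x⌋₊, f n * log n ^ i = log x ^ i * ∑ n ∈ Icc 1 ⌊x⌋₊, f n -
      ∫ t in (1)..x, i * log t ^ (i - 1) * t⁻¹ * ∑ n ∈ Icc 1 ⌊t⌋₊, f n := by
  have hne : ∀ t ∈ Set.Icc 1 x, t ≠ 0 := fun t ht => (zero_lt_one.trans_le ht.1).ne'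
  have hderiv : ∀ t ∈ Set.Icc 1 x,
      HasDerivAt (fun t => log t ^ i) (i * log t ^ (i - 1) * t⁻¹) t :=
    fun t ht => (hasDerivAt_log (hne t ht)).pow i
  have hint : IntegrableOn (deriv fun t => log t ^ i) (Set.Icc 1 x) :=
    ((continuousOn_log_pow_deriv i).mono hne).integrableOn_Icc.congr_fun
      (fun t ht => (hderiv t ht).deriv.symm) measurableSet_Icc
  have habel := sum_mul_eq_sub_integral_mul₀ (fun n => if n = 0 then 0 else f n) (if_pos rfl) x
    (fun t ht => (hderiv t ht).differentiableAt) hint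
  simp only [mul_ite, mul_zero, sum_Icc_zero_ite_eq_sum_Icc_one] at habel
  rw [intervalIntegral.integral_of_le hx, sum_congr rfl fun n _ => mul_comm (f n) _, habel]
  congr 1
  exact setIntegral_congr_fun measurableSet_Ioc fun t ht => by
    rw [(hderiv t (Set.Ioc_subset_Icc_self ht)).deriv]

noncomputable def summatoryRemainder (f c : ℕ → ℝ) (r : ℕ) (x : ℝ) : ℝ :=
  (∑ n ∈ Icc 1 ⌊x⌋₊, f n) - ∑ j ∈ range (r + 1), c j * log x ^ j

lemma locallyIntegrableOn_log_pow_deriv_mul_summatoryRemainder (f c : ℕ → ℝ) (r i : ℕ) :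
    LocallyIntegrableOn (fun t => i * log t ^ (i - 1) * t⁻¹ * summatoryRemainder f c r t)
      (Set.Ici 1) := by
  have hne : Set.Ici (1 : ℝ) ⊆ {0}ᶜ := fun t ht => (zero_lt_one.trans_le ht).ne'
  have hD := (continuousOn_log_pow_deriv i).mono hne
  have hP : ContinuousOn (fun t => ∑ j ∈ range (r + 1), c j * log t ^ j) (Set.Ici 1) :=
    continuousOn_finsetSum _ fun j _ => continuousOn_const.mul ((continuousOn_log.mono hne).pow j)
  simp only [summatoryRemainder, mul_sub]
  exact (locallyIntegrableOn_mul_sum_Icc f zero_le_one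
    (hD.locallyIntegrableOn measurableSet_Ici)).sub
      ((hD.mul hP).locallyIntegrableOn measurableSet_Ici)

-- At `i = j = 0` the weight `1 - i / (j + i)` is `1 - 0 / 0 = 1`, as it should be.
lemma sum_mul_log_pow_eq {f c : ℕ → ℝ} {r i : ℕ}
    (hint : IntegrableOn (fun t => i * log t ^ (i - 1) * t⁻¹ * summatoryRemainder f c r t)
      (Set.Ioi 1)) {x : ℝ} (hx : 1 ≤ x) :
    ∑ n ∈ Icc 1 ⌊x⌋₊, f n * log n ^ i =
      ∑ j ∈ range (r + 1), c j * (1 - i / (j + i)) * log x ^ (j + i) -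
        (∫ t in Set.Ioi 1, i * log t ^ (i - 1) * t⁻¹ * summatoryRemainder f c r t) +
      (log x ^ i * summatoryRemainder f c r x +
        ∫ t in Set.Ioi x, i * log t ^ (i - 1) * t⁻¹ * summatoryRemainder f c r t) := by
  have hP : IntervalIntegrable
      (fun t => i * log t ^ (i - 1) * t⁻¹ * ∑ j ∈ range (r + 1), c j * log t ^ j) volume 1 x := by
    have hne : Set.uIcc 1 x ⊆ {0}ᶜ := fun t ht =>
      (zero_lt_one.trans_le (Set.uIcc_of_le hx ▸ ht).1).ne'
    exact ((continuousOn_log_pow_deriv i).mul (continuousOn_finsetSum _ fun j _ =>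
      continuousOn_const.mul (continuousOn_log.pow j))).mono hne |>.intervalIntegrable
  have hE : IntervalIntegrable
      (fun t => i * log t ^ (i - 1) * t⁻¹ * summatoryRemainder f c r t) volume 1 x :=
    (intervalIntegrable_iff_integrableOn_Ioc_of_le hx).2 (hint.mono_set Set.Ioc_subset_Ioi_self)
  have hsplit : ∫ t in (1)..x, i * log t ^ (i - 1) * t⁻¹ * ∑ n ∈ Icc 1 ⌊t⌋₊, f n =
      (∫ t in (1)..x, i * log t ^ (i - 1) * t⁻¹ * ∑ j ∈ range (r + 1), c j * log t ^ j) +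
        ∫ t in (1)..x, i * log t ^ (i - 1) * t⁻¹ * summatoryRemainder f c r t := by
    rw [← intervalIntegral.integral_add hP hE]
    simp only [summatoryRemainder, mul_sub, add_sub_cancel]
  have hS : ∑ n ∈ Icc 1 ⌊x⌋₊, f n =
      ∑ j ∈ range (r + 1), c j * log x ^ j + summatoryRemainder f c r x := by
    rw [summatoryRemainder, add_sub_cancel]
  have hmain : ∑ j ∈ range (r + 1), c j * (1 - i / (j + i)) * log x ^ (j + i) =
      log x ^ i * ∑ j ∈ range (r + 1), c j * log x ^ j -
        ∑ j ∈ range (r + 1), c j * (i / (j + i)) * log x ^ (j + i) := by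
    rw [mul_sum, ← sum_sub_distrib]
    exact sum_congr rfl fun j _ => by ring
  rw [sum_mul_log_pow_eq_sub_integral f i hx, hsplit, integral_log_pow_deriv_mul_sum c r i hx,
    ← intervalIntegral.integral_Ioi_sub_Ioi hint hx, hS, hmain]
  ring

lemma isBigOPowEps_sum_mul_log_pow_sub {f c : ℕ → ℝ} {r : ℕ} {a : ℝ} (ha : a < 0)
    (hE : IsBigOPowEps a (summatoryRemainder f c r)) (i : ℕ) :
    IsBigOPowEps a fun x => ∑ n ∈ Icc 1 ⌊x⌋₊, f n * log n ^ i -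
      (∑ j ∈ range (r + 1), c j * (1 - i / (j + i)) * log x ^ (j + i) -
        ∫ t in Set.Ioi 1, i * log t ^ (i - 1) * t⁻¹ * summatoryRemainder f c r t) := by
  have hDE : IsBigOPowEps (a - 1)
      fun t => i * log t ^ (i - 1) * t⁻¹ * summatoryRemainder f c r t :=
    ((hE.inv_mul.log_pow_mul (i - 1)).const_mul i).congr' (.of_forall fun t => by ring)
  have hint := hDE.integrableOn_Ioi (by linarith)
    (locallyIntegrableOn_log_pow_deriv_mul_summatoryRemainder f c r i)
  refine ((hE.log_pow_mul i).add (hDE.integral_Ioi ha)).congr' ?_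
  filter_upwards [eventually_ge_atTop 1] with x hx
  rw [sum_mul_log_pow_eq hint hx]
  ring

lemma sum_mul_log_div_pow_eq (f : ℕ → ℝ) (k : ℕ) {x : ℝ} (hx : 0 < x) :
    ∑ n ∈ Icc 1 ⌊x⌋₊, f n * log (x / n) ^ k = ∑ i ∈ range (k + 1),
      (-1) ^ i * k.choose i * log x ^ (k - i) * ∑ n ∈ Icc 1 ⌊x⌋₊, f n * log n ^ i := by
  simp only [mul_sum]
  rw [sum_comm]
  refine sum_congr rfl fun n hn => ?_
  have hn : (n : ℝ) ≠ 0 := Nat.cast_ne_zero.2 (by simp at hn; omega)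
  rw [log_div hx.ne' hn, sub_eq_neg_add, add_pow, mul_sum]
  exact sum_congr rfl fun i _ => by rw [neg_pow]; ring

lemma sum_choose_mul_one_sub_div (k j : ℕ) :
    ∑ i ∈ range (k + 1), (-1) ^ i * k.choose i * (1 - i / (j + i) : ℝ) =
      1 + j * ∑ i ∈ Icc 1 k, (-1 : ℝ) ^ i / ((j + i : ℕ) : ℝ) * (k.choose i : ℝ) := by
  rw [sum_range_succ', ← Finset.Ico_add_one_right_eq_Icc, sum_Ico_eq_sum_range, mul_sum,
    Nat.add_sub_cancel, add_comm]
  simp only [CharP.cast_eq_zero, zero_div, sub_zero, mul_one, pow_zero, Nat.choose_zero_right,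
    Nat.cast_one]
  congr 1
  refine sum_congr rfl fun i _ => ?_
  have : (j : ℝ) + (i + 1 : ℕ) ≠ 0 := by positivity
  rw [add_comm 1 i, ← add_assoc]
  push_cast at this ⊢
  field_simp
  ring

noncomputable def logPowCoeff (k : ℕ) (c K : ℕ → ℝ) (ℓ : ℕ) : ℝ :=
  (if k ≤ ℓ then c (ℓ - k) * (1 + ((ℓ - k : ℕ) : ℝ) *
      ∑ i ∈ Icc 1 k, (-1 : ℝ) ^ i / ((ℓ - k + i : ℕ) : ℝ) * (k.choose i : ℝ)) else 0) -
    if ℓ < k then (-1) ^ (k - ℓ) * k.choose (k - ℓ) * K (k - ℓ) else 0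

lemma logPowCoeff_add_left (k j : ℕ) (c K : ℕ → ℝ) :
    logPowCoeff k c K (k + j) = c j * (1 + j * ∑ i ∈ Icc 1 k,
      (-1 : ℝ) ^ i / ((j + i : ℕ) : ℝ) * (k.choose i : ℝ)) := by
  simp [logPowCoeff]

lemma logPowCoeff_of_lt {k ℓ : ℕ} (h : ℓ < k) (c K : ℕ → ℝ) :
    logPowCoeff k c K ℓ = -((-1) ^ (k - ℓ) * k.choose (k - ℓ) * K (k - ℓ)) := by
  simp [logPowCoeff, h, h.not_ge]

lemma sum_choose_mul_log_pow_eq_sum_logPowCoeff (k r : ℕ) (c K : ℕ → ℝ) (hK : K 0 = 0)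
    (L : ℝ) :
    ∑ i ∈ range (k + 1), (-1) ^ i * k.choose i * L ^ (k - i) *
        (∑ j ∈ range (r + 1), c j * (1 - i / (j + i)) * L ^ (j + i) - K i) =
      ∑ ℓ ∈ range (k + r + 1), logPowCoeff k c K ℓ * L ^ ℓ := by
  have hmain : ∑ i ∈ range (k + 1), (-1) ^ i * k.choose i * L ^ (k - i) *
        ∑ j ∈ range (r + 1), c j * (1 - i / (j + i)) * L ^ (j + i) =
      ∑ j ∈ range (r + 1), logPowCoeff k c K (k + j) * L ^ (k + j) := by
    simp_rw [mul_sum (s := range (r + 1))]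
    rw [sum_comm]
    refine sum_congr rfl fun j _ => ?_
    rw [logPowCoeff_add_left, ← sum_choose_mul_one_sub_div, mul_sum, sum_mul]
    refine sum_congr rfl fun i hi => ?_
    have hL : L ^ (k - i) * L ^ (j + i) = L ^ (k + j) := by
      rw [← pow_add]; congr 1; simp at hi; omega
    rw [← hL]
    ring
  have hconst : ∑ i ∈ range (k + 1), (-1) ^ i * k.choose i * L ^ (k - i) * K i =
      -∑ ℓ ∈ range k, logPowCoeff k c K ℓ * L ^ ℓ := by
    rw [← sum_range_reflect, sum_range_succ, ← sum_neg_distrib]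
    simp only [add_tsub_cancel_right, tsub_self, hK, mul_zero, add_zero]
    refine sum_congr rfl fun ℓ hℓ => ?_
    have hℓ : ℓ < k := mem_range.1 hℓ
    rw [logPowCoeff_of_lt hℓ, Nat.sub_sub_self hℓ.le]
    ring
  rw [show k + r + 1 = k + (r + 1) by ring,
    sum_range_add (fun ℓ => logPowCoeff k c K ℓ * L ^ ℓ), ← hmain]
  simp only [mul_sub, sum_sub_distrib, hconst]
  ring

/-- First part of Lemma 1: if
`∑_{n ≤ x} f n = ∑_{j=0}^r c_j (log x)^j + O(x^{-1/2+ε})` for every `ε > 0`, then for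
every `k ≥ 1` there are constants `C_0, …, C_{k+r}` with
`∑_{n ≤ x} f n (log (x/n))^k = ∑_{ℓ=0}^{k+r} C_ℓ (log x)^ℓ + O(x^{-1/2+ε})`, and for
`k ≤ ℓ ≤ k + r` the constants are given by the explicit formula. -/
theorem sum_mul_log_pow_asymptotic (r : ℕ) (f : ℕ → ℝ) (c : ℕ → ℝ)
    (hf : ∀ ε > (0 : ℝ),
      (fun x : ℝ => (∑ n ∈ Finset.Icc 1 ⌊x⌋₊, f n) -
          ∑ j ∈ Finset.range (r + 1), c j * Real.log x ^ j)
        =O[atTop] fun x : ℝ => x ^ (-1 / 2 + ε)) :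
    ∀ k : ℕ, 0 < k → ∃ C : ℕ → ℝ,
      (∀ ℓ ∈ Finset.Icc k (k + r),
        C ℓ = c (ℓ - k) * (1 + ((ℓ - k : ℕ) : ℝ) *
          ∑ i ∈ Finset.Icc 1 k, (-1 : ℝ) ^ i / ((ℓ - k + i : ℕ) : ℝ) * (k.choose i : ℝ))) ∧
      ∀ ε > (0 : ℝ),
        (fun x : ℝ => (∑ n ∈ Finset.Icc 1 ⌊x⌋₊, f n * Real.log (x / (n : ℝ)) ^ k) -
            ∑ ℓ ∈ Finset.range (k + r + 1), C ℓ * Real.log x ^ ℓ)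
          =O[atTop] fun x : ℝ => x ^ (-1 / 2 + ε) := by
  intro k _
  let K : ℕ → ℝ := fun i =>
    ∫ t in Set.Ioi 1, i * log t ^ (i - 1) * t⁻¹ * summatoryRemainder f c r t
  refine ⟨logPowCoeff k c K, fun ℓ hℓ => ?_, ?_⟩
  · have hkℓ := (mem_Icc.1 hℓ).1
    simp only [logPowCoeff, if_pos hkℓ, if_neg hkℓ.not_gt, sub_zero]
  have hA := isBigOPowEps_sum_mul_log_pow_sub (by norm_num : (-1 / 2 : ℝ) < 0) hf
  refine (IsBigOPowEps.sum (s := range (k + 1)) fun i _ =>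
    ((hA i).log_pow_mul (k - i)).const_mul ((-1) ^ i * k.choose i)).congr' ?_
  filter_upwards [eventually_gt_atTop 0] with x hx
  rw [sum_mul_log_div_pow_eq f k hx,
    ← sum_choose_mul_log_pow_eq_sum_logPowCoeff k r c K (by simp [K]), ← sum_sub_distrib]
  exact sum_congr rfl fun i _ => by ring
end

section
/- Let $r \ge t \ge 1$ be integers and let $f$ be an arithmetic function such that $\sum_{n \le x} f(n) = \sum_{j=t}^{r} c_j (\log x)^j + O((\log x)^{t-1})$ for some constants $c_t, \ldots, c_r$. Then for every positive integer $k$ there exist constants $C_{k+t}, \ldots, C_{k+r}$ such that $\sum_{n \le x} f(n)(\log(x/n))^k = \sum_{j=k+t}^{k+r} C_j (\log x)^j + O((\log x)^{t+k-1})$, where for each $j$, $C_j = c_{j-k} \Big( 1 + (j-k) \sum_{i=1}^{k} \frac{(-1)^i}{j-k+i} \binom{k}{i} \Big)$. -/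
open Filter Finset Real MeasureTheory Asymptotics

/-!
Put `S u = ∑_{n ≤ u} f n`, `P u = ∑_{j=t}^r c_j (log u)^j` and `L = log x`. Since
`(log (x/n))^k = ∫_n^x k (log (x/u))^(k-1) du/u`, partial summation gives
`∑_{n ≤ x} f n (log (x/n))^k = ∫_1^x S u · k (log (x/u))^(k-1) du/u`.
With `S` replaced by `P`, the substitution `u = e^v` turns the `j`-th term into the Beta integral
`∫_0^L v^j k (L - v)^(k-1) dv`; one integration by parts and the binomial expansion of
`(L - v)^k` evaluate it as `L^(j+k)` times the stated coefficient. The remaining error `S - P` is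
`O(L^(t-1))` uniformly on `[1, x]`, and the weight has total mass `L^k`.
-/

/-- The weight `-∂/∂u (log (x/u))^k` that partial summation puts on `∑_{n ≤ u} f n`. -/
noncomputable def logWeight (k : ℕ) (x u : ℝ) : ℝ := k * log (x / u) ^ (k - 1) / u

/-- This is `j! k! / (j + k)!`, in the form produced by the binomial expansion. -/
noncomputable def logMomentCoeff (k j : ℕ) : ℝ :=
  1 + j * ∑ i ∈ Icc 1 k, (-1 : ℝ) ^ i / ((j + i : ℕ) : ℝ) * k.choose i

theorem integral_pow_mul_sub_pow (L : ℝ) (m k : ℕ) :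
    ∫ v in (0 : ℝ)..L, v ^ m * (L - v) ^ k =
      L ^ (m + k + 1) * ∑ i ∈ range (k + 1), (-1 : ℝ) ^ i * k.choose i / ((m + i + 1 : ℕ) : ℝ) := by
  have hexpand : ∀ v : ℝ, v ^ m * (L - v) ^ k =
      ∑ i ∈ range (k + 1), (-1) ^ i * k.choose i * L ^ (k - i) * v ^ (m + i) := by
    intro v
    rw [sub_eq_neg_add, add_pow, mul_sum]
    refine sum_congr rfl fun i _ => ?_
    rw [neg_pow, pow_add]
    ring
  simp_rw [hexpand]
  rw [intervalIntegral.integral_finsetSum fun i _ =>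
    (intervalIntegral.intervalIntegrable_pow _).const_mul _, mul_sum]
  refine sum_congr rfl fun i hi => ?_
  have hpow : L ^ (m + k + 1) = L ^ (k - i) * L ^ (m + i + 1) := by
    rw [← pow_add]
    have := mem_range.mp hi
    congr 1
    omega
  rw [intervalIntegral.integral_const_mul, integral_pow, hpow, zero_pow (Nat.succ_ne_zero _),
    sub_zero]
  push_cast
  ring

theorem integral_pow_mul_mul_sub_pow_pred (L : ℝ) (j : ℕ) {k : ℕ} (hk : k ≠ 0) :
    ∫ v in (0 : ℝ)..L, v ^ j * (k * (L - v) ^ (k - 1)) = L ^ (j + k) * logMomentCoeff k j := by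
  have hderiv : ∀ v ∈ Set.uIcc 0 L,
      HasDerivAt (fun v : ℝ => -(L - v) ^ k) (k * (L - v) ^ (k - 1)) v := fun v _ => by
    simpa using ((hasDerivAt_id v).const_sub L).fun_pow k |>.fun_neg
  have hint : IntervalIntegrable (fun v : ℝ => k * (L - v) ^ (k - 1)) volume 0 L :=
    (by fun_prop : Continuous _).intervalIntegrable _ _
  cases j with
  | zero =>
    simp [logMomentCoeff, intervalIntegral.integral_eq_sub_of_hasDerivAt hderiv hint, zero_pow hk]
  | succ m =>
    have hpow : ∀ v ∈ Set.uIcc 0 L,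
        HasDerivAt (fun v : ℝ => v ^ (m + 1)) ((m + 1) * v ^ m) v := fun v _ => by
      simpa using hasDerivAt_pow (m + 1) v
    have hshift : ∀ g : ℕ → ℝ, ∑ i ∈ Icc 1 k, g i = ∑ i ∈ range k, g (i + 1) := fun g => by
      rw [range_eq_Ico, sum_Ico_add' g 0 k 1]
      rfl
    rw [intervalIntegral.integral_mul_deriv_eq_deriv_mul hpow hderiv
      ((by fun_prop : Continuous _).intervalIntegrable _ _) hint]
    simp only [sub_self, sub_zero, zero_pow hk, zero_pow m.succ_ne_zero, neg_zero, mul_zero,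
      zero_mul, mul_neg, intervalIntegral.integral_neg, zero_sub, neg_neg, mul_assoc,
      intervalIntegral.integral_const_mul, integral_pow_mul_sub_pow]
    rw [logMomentCoeff, sum_range_succ', hshift, pow_add L (m + 1), Nat.choose_zero_right]
    push_cast
    field_simp
    ring_nf

theorem integral_comp_log_div {G : ℝ → ℝ} (hG : Continuous G) {a b : ℝ} (ha : 0 < a)
    (hb : 0 < b) : ∫ u in a..b, G (log u) / u = ∫ v in log a..log b, G v := by
  have hpos : ∀ u ∈ Set.uIcc a b, 0 < u := fun u hu => (lt_inf_iff.2 ⟨ha, hb⟩).trans_le hu.1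
  simpa only [Function.comp_apply, div_eq_mul_inv] using
    intervalIntegral.integral_comp_mul_deriv (fun u hu => hasDerivAt_log (hpos u hu).ne')
      (continuousOn_inv₀.mono fun u hu => (hpos u hu).ne') hG

theorem uIcc_one_subset_Ioi_zero {x : ℝ} (hx : 1 ≤ x) : Set.uIcc 1 x ⊆ Set.Ioi 0 := by
  rw [Set.uIcc_of_le hx]
  exact fun u hu => zero_lt_one.trans_le hu.1

theorem continuousOn_log_pow (j : ℕ) : ContinuousOn (fun u => log u ^ j) (Set.Ioi 0) :=
  (continuousOn_log.mono fun _ hu => (Set.mem_Ioi.mp hu).ne').pow j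

theorem hasDerivAt_log_div_pow (k : ℕ) {x u : ℝ} (hx : x ≠ 0) (hu : u ≠ 0) :
    HasDerivAt (fun u => log (x / u) ^ k) (-logWeight k x u) u := by
  have hdiv : HasDerivAt (fun u => x / u) (x * -(u ^ 2)⁻¹) u := by
    simpa only [div_eq_mul_inv] using (hasDerivAt_inv hu).const_mul x
  refine ((hdiv.log (div_ne_zero hx hu)).fun_pow k).congr_deriv ?_
  rw [logWeight]
  field_simp

theorem continuousOn_logWeight (k : ℕ) {x : ℝ} (hx : 0 < x) :
    ContinuousOn (logWeight k x) (Set.Ioi 0) := by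
  have hlog : ContinuousOn (fun u => log (x / u)) (Set.Ioi 0) :=
    (continuousOn_const.div continuousOn_id fun u hu => (Set.mem_Ioi.mp hu).ne').log
      fun u hu => (div_pos hx hu).ne'
  exact (continuousOn_const.mul (hlog.pow _)).div continuousOn_id
    fun u hu => (Set.mem_Ioi.mp hu).ne'

theorem intervalIntegrable_logWeight (k : ℕ) {x : ℝ} (hx : 1 ≤ x) :
    IntervalIntegrable (logWeight k x) volume 1 x :=
  ((continuousOn_logWeight k (by linarith)).mono (uIcc_one_subset_Ioi_zero hx)).intervalIntegrable

theorem integral_logWeight_mul_log_pow (j : ℕ) {k : ℕ} (hk : k ≠ 0) {x : ℝ} (hx : 1 ≤ x) :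
    ∫ u in (1 : ℝ)..x, logWeight k x u * log u ^ j = log x ^ (j + k) * logMomentCoeff k j := by
  let G : ℝ → ℝ := fun v => v ^ j * (k * (log x - v) ^ (k - 1))
  have hsubst : ∀ u ∈ Set.uIcc 1 x, logWeight k x u * log u ^ j = G (log u) / u := by
    intro u hu
    rw [logWeight, log_div (by linarith) (uIcc_one_subset_Ioi_zero hx hu).ne']
    ring
  rw [intervalIntegral.integral_congr hsubst,
    integral_comp_log_div (by fun_prop) one_pos (by linarith), log_one,
    integral_pow_mul_mul_sub_pow_pred _ _ hk]

theorem integral_logWeight {k : ℕ} (hk : k ≠ 0) {x : ℝ} (hx : 1 ≤ x) :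
    ∫ u in (1 : ℝ)..x, logWeight k x u = log x ^ k := by
  simpa [logMomentCoeff] using integral_logWeight_mul_log_pow 0 hk hx

theorem integral_logWeight_mul_sum_log_pow (c : ℕ → ℝ) (t r : ℕ) {k : ℕ} (hk : k ≠ 0)
    {x : ℝ} (hx : 1 ≤ x) :
    ∫ u in (1 : ℝ)..x, logWeight k x u * ∑ j ∈ Icc t r, c j * log u ^ j =
      ∑ j ∈ Icc (k + t) (k + r), c (j - k) * logMomentCoeff k (j - k) * log x ^ j := by
  have hterm : ∀ j, ContinuousOn (fun u => c j * log u ^ j) (Set.uIcc 1 x) := fun j =>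
    continuousOn_const.mul ((continuousOn_log_pow j).mono (uIcc_one_subset_Ioi_zero hx))
  conv_lhs => enter [1, u]; rw [mul_sum]
  rw [intervalIntegral.integral_finsetSum fun j _ =>
    (intervalIntegrable_logWeight k hx).mul_continuousOn (hterm j), ← map_add_left_Icc, sum_map]
  refine sum_congr rfl fun j _ => ?_
  simp_rw [mul_left_comm _ (c j)]
  rw [intervalIntegral.integral_const_mul, integral_logWeight_mul_log_pow j hk hx,
    addLeftEmbedding_apply, Nat.add_sub_cancel_left, add_comm k j]
  ring

theorem norm_integral_logWeight_mul_le {E : ℝ → ℝ} {k : ℕ} (hk : k ≠ 0) {x M : ℝ}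
    (hx : 1 ≤ x) (hE : ∀ u ∈ Set.Icc 1 x, |E u| ≤ M) :
    ‖∫ u in (1 : ℝ)..x, logWeight k x u * E u‖ ≤ M * log x ^ k := by
  have hweight : ∀ u ∈ Set.Ioc 1 x, 0 ≤ logWeight k x u := fun u hu => by
    have hu0 : 0 < u := by linarith [hu.1]
    have := log_nonneg ((one_le_div hu0).mpr hu.2)
    unfold logWeight
    positivity
  calc ‖∫ u in (1 : ℝ)..x, logWeight k x u * E u‖
      ≤ ∫ u in (1 : ℝ)..x, M * logWeight k x u := by
        refine intervalIntegral.norm_integral_le_of_norm_le hx (ae_of_all _ fun u hu => ?_)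
          ((intervalIntegrable_logWeight k hx).const_mul M)
        rw [norm_mul, Real.norm_of_nonneg (hweight u hu), mul_comm M]
        exact mul_le_mul_of_nonneg_left (hE u (Set.Ioc_subset_Icc_self hu)) (hweight u hu)
    _ = M * log x ^ k := by rw [intervalIntegral.integral_const_mul, integral_logWeight hk hx]

theorem sum_Icc_one_mul_eq_sub_integral (f : ℕ → ℝ) {φ : ℝ → ℝ} (b : ℝ)
    (hφ_diff : ∀ u ∈ Set.Icc 1 b, DifferentiableAt ℝ φ u)
    (hφ_int : IntegrableOn (deriv φ) (Set.Icc 1 b)) :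
    ∑ n ∈ Icc 1 ⌊b⌋₊, φ n * f n =
      φ b * ∑ n ∈ Icc 1 ⌊b⌋₊, f n - ∫ u in Set.Ioc 1 b, deriv φ u * ∑ n ∈ Icc 1 ⌊u⌋₊, f n := by
  let c : ℕ → ℝ := fun n => if n = 0 then 0 else f n
  have hc : ∀ (g : ℕ → ℝ) (m : ℕ), ∑ n ∈ Icc 0 m, g n * c n = ∑ n ∈ Icc 1 m, g n * f n := by
    intro g m
    rw [← add_sum_Ioc_eq_sum_Icc (Nat.zero_le m), ← Icc_add_one_left_eq_Ioc]
    simp only [c, ↓reduceIte, mul_zero, zero_add]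
    exact sum_congr rfl fun n hn => by rw [if_neg (Nat.one_le_iff_ne_zero.mp (mem_Icc.mp hn).1)]
  have hc_one : ∀ m, ∑ n ∈ Icc 0 m, c n = ∑ n ∈ Icc 1 m, f n := fun m => by
    simpa using hc 1 m
  simpa only [hc, hc_one] using sum_mul_eq_sub_integral_mul₀ c (by simp [c]) b hφ_diff hφ_int

theorem sum_mul_log_div_pow_eq_integral (f : ℕ → ℝ) {k : ℕ} (hk : k ≠ 0) {x : ℝ} (hx : 1 ≤ x) :
    ∑ n ∈ Icc 1 ⌊x⌋₊, f n * log (x / n) ^ k =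
      ∫ u in (1 : ℝ)..x, logWeight k x u * ∑ n ∈ Icc 1 ⌊u⌋₊, f n := by
  have hderiv : ∀ u ∈ Set.Icc 1 x, HasDerivAt (fun u => log (x / u) ^ k) (-logWeight k x u) u :=
    fun u hu => hasDerivAt_log_div_pow k (by linarith) (by linarith [hu.1])
  have hderiv_eq : Set.EqOn (deriv fun u => log (x / u) ^ k) (-logWeight k x) (Set.Icc 1 x) :=
    fun u hu => (hderiv u hu).deriv
  have hcont : ContinuousOn (-logWeight k x) (Set.Icc 1 x) :=
    (continuousOn_logWeight k (by linarith)).neg.mono fun u hu => zero_lt_one.trans_le hu.1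
  have habel := sum_Icc_one_mul_eq_sub_integral f x (fun u hu => (hderiv u hu).differentiableAt)
    (hcont.integrableOn_Icc.congr_fun hderiv_eq.symm measurableSet_Icc)
  rw [div_self (by linarith), log_one, zero_pow hk, zero_mul, zero_sub,
    setIntegral_congr_fun measurableSet_Ioc
      fun u hu => by rw [hderiv_eq (Set.Ioc_subset_Icc_self hu)]] at habel
  simp_rw [mul_comm (f _), habel, intervalIntegral.integral_of_le hx, Pi.neg_apply, neg_mul,
    integral_neg, neg_neg]

theorem sum_mul_log_div_pow_sub_eq_integral (f c : ℕ → ℝ) (t r : ℕ) {k : ℕ} (hk : k ≠ 0)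
    {x : ℝ} (hx : 1 ≤ x) :
    ∑ n ∈ Icc 1 ⌊x⌋₊, f n * log (x / n) ^ k -
        ∑ j ∈ Icc (k + t) (k + r), c (j - k) * logMomentCoeff k (j - k) * log x ^ j =
      ∫ u in (1 : ℝ)..x,
        logWeight k x u * (∑ n ∈ Icc 1 ⌊u⌋₊, f n - ∑ j ∈ Icc t r, c j * log u ^ j) := by
  have hweight := intervalIntegrable_logWeight k hx
  have hS : IntervalIntegrable (fun u => logWeight k x u * ∑ n ∈ Icc 1 ⌊u⌋₊, f n) volume 1 x :=
    (intervalIntegrable_iff_integrableOn_Icc_of_le hx).mpr <| integrableOn_mul_sum_Icc f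
      zero_le_one ((intervalIntegrable_iff_integrableOn_Icc_of_le hx).mp hweight)
  have hP : IntervalIntegrable (fun u => logWeight k x u * ∑ j ∈ Icc t r, c j * log u ^ j)
      volume 1 x :=
    hweight.mul_continuousOn <| continuousOn_finsetSum _ fun j _ =>
      continuousOn_const.mul ((continuousOn_log_pow j).mono (uIcc_one_subset_Ioi_zero hx))
  simp_rw [mul_sub]
  rw [intervalIntegral.integral_sub hS hP, sum_mul_log_div_pow_eq_integral f hk hx,
    integral_logWeight_mul_sum_log_pow c t r hk hx]

theorem exists_abs_sum_Icc_floor_sub_le (f : ℕ → ℝ) {P : ℝ → ℝ} {b : ℝ}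
    (hP : ContinuousOn P (Set.Icc 1 b)) :
    ∃ B, ∀ u ∈ Set.Icc 1 b, |∑ n ∈ Icc 1 ⌊u⌋₊, f n - P u| ≤ B := by
  obtain ⟨C, hC⟩ := isCompact_Icc.exists_bound_of_continuousOn hP
  refine ⟨∑ n ∈ Icc 1 ⌊b⌋₊, |f n| + C, fun u hu => ?_⟩
  have hS : |∑ n ∈ Icc 1 ⌊u⌋₊, f n| ≤ ∑ n ∈ Icc 1 ⌊b⌋₊, |f n| :=
    (abs_sum_le_sum_abs _ _).trans <| sum_le_sum_of_subset_of_nonneg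
      (Icc_subset_Icc_right (Nat.floor_mono hu.2)) fun _ _ _ => abs_nonneg _
  linarith [abs_sub (∑ n ∈ Icc 1 ⌊u⌋₊, f n) (P u), hC u hu, Real.norm_eq_abs (P u)]

theorem exists_eventually_forall_Icc_abs_le_log_pow {E : ℝ → ℝ} {m : ℕ}
    (hE : E =O[atTop] fun u => log u ^ m) (hloc : ∀ b, ∃ B, ∀ u ∈ Set.Icc 1 b, |E u| ≤ B) :
    ∃ K, ∀ᶠ x in atTop, ∀ u ∈ Set.Icc 1 x, |E u| ≤ K * log x ^ m := by
  obtain ⟨c, hc⟩ := hE.bound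
  obtain ⟨b, hb⟩ := eventually_atTop.mp hc
  obtain ⟨B, hB⟩ := hloc b
  refine ⟨|B| + |c|, ?_⟩
  filter_upwards [eventually_ge_atTop (exp 1)] with x hx u hu
  have hlogx : 1 ≤ log x := by rwa [le_log_iff_exp_le ((exp_pos 1).trans_le hx)]
  have hlogu : 0 ≤ log u := log_nonneg hu.1
  have hlog_le : log u ^ m ≤ log x ^ m :=
    pow_le_pow_left₀ hlogu (log_le_log (by linarith [hu.1]) hu.2) m
  have hone : 1 ≤ log x ^ m := one_le_pow₀ hlogx
  rcases le_total u b with hub | hbu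
  · calc |E u| ≤ |B| * 1 := by linarith [hB u ⟨hu.1, hub⟩, le_abs_self B]
      _ ≤ (|B| + |c|) * log x ^ m := by gcongr; linarith [abs_nonneg c]
  · have hbound := hb u hbu
    rw [Real.norm_eq_abs, Real.norm_eq_abs, abs_of_nonneg (pow_nonneg hlogu m)] at hbound
    calc |E u| ≤ |c| * log u ^ m :=
          hbound.trans (mul_le_mul_of_nonneg_right (le_abs_self c) (pow_nonneg hlogu m))
      _ ≤ (|B| + |c|) * log x ^ m := by gcongr; linarith [abs_nonneg B]

theorem sum_mul_log_pow_asymptotic_log_error_general (r t : ℕ) (ht : 1 ≤ t)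
    (f : ℕ → ℝ) (c : ℕ → ℝ)
    (hf : (fun x : ℝ => (∑ n ∈ Finset.Icc 1 ⌊x⌋₊, f n) -
          ∑ j ∈ Finset.Icc t r, c j * Real.log x ^ j)
        =O[atTop] fun x : ℝ => Real.log x ^ (t - 1)) :
    ∀ k : ℕ, 0 < k → ∃ C : ℕ → ℝ,
      (∀ j ∈ Finset.Icc (k + t) (k + r),
        C j = c (j - k) * (1 + ((j - k : ℕ) : ℝ) *
          ∑ i ∈ Finset.Icc 1 k, (-1 : ℝ) ^ i / ((j - k + i : ℕ) : ℝ) * (k.choose i : ℝ))) ∧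
      (fun x : ℝ => (∑ n ∈ Finset.Icc 1 ⌊x⌋₊, f n * Real.log (x / (n : ℝ)) ^ k) -
          ∑ j ∈ Finset.Icc (k + t) (k + r), C j * Real.log x ^ j)
        =O[atTop] fun x : ℝ => Real.log x ^ (t + k - 1) := by
  intro k hk
  refine ⟨fun j => c (j - k) * logMomentCoeff k (j - k), fun _ _ => rfl, ?_⟩
  have hP : ContinuousOn (fun u => ∑ j ∈ Icc t r, c j * log u ^ j) (Set.Ici 1) :=
    continuousOn_finsetSum _ fun j _ => continuousOn_const.mul
      ((continuousOn_log_pow j).mono fun _ hu => zero_lt_one.trans_le (Set.mem_Ici.mp hu))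
  obtain ⟨K, hK⟩ := exists_eventually_forall_Icc_abs_le_log_pow hf fun _ =>
    exists_abs_sum_Icc_floor_sub_le f (hP.mono Set.Icc_subset_Ici_self)
  refine IsBigO.of_bound K ?_
  filter_upwards [hK, eventually_ge_atTop 1] with x hxK hx
  rw [sum_mul_log_div_pow_sub_eq_integral f c t r hk.ne' hx]
  calc _ ≤ K * log x ^ (t - 1) * log x ^ k := norm_integral_logWeight_mul_le hk.ne' hx hxK
    _ = K * ‖log x ^ (t + k - 1)‖ := by
      rw [norm_of_nonneg (pow_nonneg (log_nonneg hx) _), mul_assoc, ← pow_add, Nat.sub_add_comm ht]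

/-- Second part of Lemma 1: if
`∑_{n ≤ x} f n = ∑_{j=t}^r c_j (log x)^j + O((log x)^{t-1})` with `r ≥ t ≥ 1`, then for
every `k ≥ 1` there exist constants `C_{k+t}, …, C_{k+r}`, given by the explicit
formula, with `∑_{n ≤ x} f n (log (x/n))^k = ∑_{j=k+t}^{k+r} C_j (log x)^j
  + O((log x)^{t+k-1})`. -/
theorem sum_mul_log_pow_asymptotic_log_error (r t : ℕ) (ht : 1 ≤ t) (htr : t ≤ r)
    (f : ℕ → ℝ) (c : ℕ → ℝ)
    (hf : (fun x : ℝ => (∑ n ∈ Finset.Icc 1 ⌊x⌋₊, f n) -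
          ∑ j ∈ Finset.Icc t r, c j * Real.log x ^ j)
        =O[atTop] fun x : ℝ => Real.log x ^ (t - 1)) :
    ∀ k : ℕ, 0 < k → ∃ C : ℕ → ℝ,
      (∀ j ∈ Finset.Icc (k + t) (k + r),
        C j = c (j - k) * (1 + ((j - k : ℕ) : ℝ) *
          ∑ i ∈ Finset.Icc 1 k, (-1 : ℝ) ^ i / ((j - k + i : ℕ) : ℝ) * (k.choose i : ℝ))) ∧
      (fun x : ℝ => (∑ n ∈ Finset.Icc 1 ⌊x⌋₊, f n * Real.log (x / (n : ℝ)) ^ k) -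
          ∑ j ∈ Finset.Icc (k + t) (k + r), C j * Real.log x ^ j)
        =O[atTop] fun x : ℝ => Real.log x ^ (t + k - 1) :=
  sum_mul_log_pow_asymptotic_log_error_general r t ht f c hf
end

section
/- Let $k \ge 1$ be an integer and let $f$ be an arithmetic function such that $\sum_{n \le x} \frac{f(n)}{n} = a (\log x)^k + b (\log x)^{k-1} + O((\log x)^{k-2})$ as $x \to \infty$, for some constants $a, b$. Then $\sum_{n \le x} f(n) = a\,k\, x (\log x)^{k-1} + O\big(x (\log x)^{k-2}\big)$ as $x \to \infty$. -/
/-!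
Write `S x = ∑_{n ≤ x} f n / n` and `P t = a (log t)^k + b (log t)^(k-1)`. Abel summation
gives `∑_{n ≤ x} f n = x S x - ∫_1^x S`. The function `H x = x P x - a k x (log x)^(k-1)` has a
derivative `D` differing from `P` only by a multiple of `(log t)^(k-2)`, so
`S - D = O((log t)^(k-2))` and
`∑_{n ≤ x} f n - a k x (log x)^(k-1) = x (S - P) x + H 1 - ∫_1^x (S - D)`.
An integrand that is `O((log t)^m)` has integral `O(x (log x)^m)`, since for large `t` the
function `(log t)^m` is at most twice the derivative of `t (log t)^m`.
-/

open Filter Finset Asymptotics MeasureTheory Real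

theorem tendsto_mul_log_zpow_atTop (m : ℤ) :
    Tendsto (fun x => x * log x ^ m) atTop atTop := by
  obtain ⟨n, rfl | rfl⟩ := m.eq_nat_or_neg
  · refine tendsto_atTop_mono' atTop ?_ tendsto_id
    filter_upwards [eventually_ge_atTop 0, tendsto_log_atTop.eventually_ge_atTop 1]
      with x hx hlog
    simpa using le_mul_of_one_le_right hx (one_le_pow₀ hlog)
  · have hpos : ∀ᶠ x in atTop, 0 < log x ^ n / x := by
      filter_upwards [eventually_gt_atTop 0, tendsto_log_atTop.eventually_gt_atTop 0]
        with x hx hlog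
      positivity
    refine (tendsto_nhdsWithin_iff.2
      ⟨isLittleO_pow_log_id_atTop.tendsto_div_nhds_zero, hpos⟩).inv_tendsto_nhdsGT_zero.congr ?_
    intro x
    simp [div_eq_mul_inv, mul_comm]

theorem hasDerivAt_mul_log_pow (n : ℕ) {t : ℝ} (ht : t ≠ 0) :
    HasDerivAt (fun x => x * log x ^ n) (log t ^ n + n * log t ^ (n - 1)) t := by
  refine ((hasDerivAt_id t).mul ((hasDerivAt_log ht).pow n)).congr_deriv ?_
  simp only [Pi.pow_apply, id]
  field_simp

theorem hasDerivAt_mul_log_zpow (m : ℤ) {t : ℝ} (ht : 1 < t) :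
    HasDerivAt (fun x => x * log x ^ m) (log t ^ m + m * log t ^ (m - 1)) t := by
  have hlog := (hasDerivAt_zpow m (log t) (Or.inl (log_pos ht).ne')).comp t
    (hasDerivAt_log (by linarith))
  refine ((hasDerivAt_id t).mul hlog).congr_deriv ?_
  simp only [Function.comp_apply, id]
  field_simp [show t ≠ 0 by linarith]

theorem eventually_log_zpow_le_two_mul_deriv (m : ℤ) :
    ∀ᶠ t in atTop, 0 ≤ log t ^ m ∧ log t ^ m ≤ 2 * (log t ^ m + m * log t ^ (m - 1)) := by
  filter_upwards [tendsto_log_atTop.eventually_ge_atTop (2 * |(m : ℝ)| + 1)] with t ht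
  have hL : 0 < log t := by linarith [abs_nonneg (m : ℝ)]
  have hpow : 0 < log t ^ m := zpow_pos hL m
  have hratio : -1 / 2 ≤ m / log t := by
    rw [le_div_iff₀ hL]
    linarith [neg_abs_le (m : ℝ)]
  refine ⟨hpow.le, ?_⟩
  have : (m : ℝ) * log t ^ (m - 1) = m / log t * log t ^ m := by
    rw [zpow_sub_one₀ hL.ne']; ring
  nlinarith

theorem natCast_sub_one_mul_log_pow_isBigO_log_zpow (k : ℕ) :
    (fun x => ((k - 1 : ℕ) : ℝ) * log x ^ (k - 2)) =O[atTop]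
      fun x => log x ^ ((k : ℤ) - 2) := by
  rcases k with _ | _ | k
  · simpa using isBigO_zero _ _
  · simpa using isBigO_zero _ _
  · refine (isBigO_refl (fun x => log x ^ k) atTop).const_mul_left _ |>.congr_right ?_
    intro x
    rw [show ((k + 2 : ℕ) : ℤ) - 2 = k by push_cast; ring, zpow_natCast]

theorem isBigO_integral_Ioc_of_isBigO_deriv {E g G : ℝ → ℝ} {a : ℝ}
    (hE : LocallyIntegrableOn E (Set.Ici a)) (hG : ∀ᶠ t in atTop, HasDerivAt G (g t) t)
    (hg : ∀ᶠ t in atTop, 0 ≤ g t) (hGtop : Tendsto G atTop atTop) (hEg : E =O[atTop] g) :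
    (fun x => ∫ t in Set.Ioc a x, E t) =O[atTop] G := by
  have hE (x : ℝ) : IntegrableOn E (Set.Ioc a x) :=
    (hE.integrableOn_compact_subset Set.Icc_subset_Ici_self isCompact_Icc).mono_set
      Set.Ioc_subset_Icc_self
  obtain ⟨C, hC⟩ := hEg.bound
  obtain ⟨X, hX⟩ := eventually_atTop.1 (hG.and (hg.and hC))
  set Y := max a X
  have hY : ∀ t, Y ≤ t → HasDerivAt G (g t) t ∧ ‖E t‖ ≤ C * g t := fun t ht => by
    obtain ⟨hd, hg0, hb⟩ := hX t (le_of_max_le_right ht)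
    exact ⟨hd, by rwa [norm_of_nonneg hg0] at hb⟩
  have htail : ∀ x, Y ≤ x → ‖∫ t in Set.Ioc Y x, E t‖ ≤ C * G x - C * G Y := fun x hx => by
    refine (norm_integral_le_integral_norm E).trans ?_
    rw [← intervalIntegral.integral_of_le hx]
    refine intervalIntegral.integral_le_sub_of_hasDeriv_right_of_le hx
      (fun t ht => ((hY t ht.1).1.continuousAt.const_mul C).continuousWithinAt)
      (fun t ht => (((hY t ht.1.le).1).const_mul C).hasDerivWithinAt)
      (((integrableOn_Icc_iff_integrableOn_Ioc).2
        ((hE x).mono_set (Set.Ioc_subset_Ioc_left (le_max_left a X)))).norm)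
      fun t ht => (hY t ht.1.le).2
  set K := ‖∫ t in Set.Ioc a Y, E t‖ - C * G Y
  have hbound : ∀ᶠ x in atTop, ‖∫ t in Set.Ioc a x, E t‖ ≤ K + C * G x := by
    filter_upwards [eventually_ge_atTop Y] with x hx
    rw [← Set.Ioc_union_Ioc_eq_Ioc (le_max_left a X) hx, setIntegral_union
      (Set.Ioc_disjoint_Ioc_of_le le_rfl) measurableSet_Ioc (hE Y)
      ((hE x).mono_set (Set.Ioc_subset_Ioc_left (le_max_left a X)))]
    linarith [norm_add_le (∫ t in Set.Ioc a Y, E t) (∫ t in Set.Ioc Y x, E t), htail x hx]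
  have hK : (fun _ => K) =O[atTop] G :=
    (isLittleO_const_left.2 (Or.inr (tendsto_abs_atTop_atTop.comp hGtop))).isBigO
  exact (IsBigO.of_norm_eventuallyLE hbound).trans
    (hK.add ((isBigO_refl G atTop).const_mul_left C))

theorem isBigO_integral_Ioc_mul_log_zpow {E : ℝ → ℝ} {a : ℝ} (m : ℤ)
    (hE : LocallyIntegrableOn E (Set.Ici a)) (hEm : E =O[atTop] fun t => log t ^ m) :
    (fun x => ∫ t in Set.Ioc a x, E t) =O[atTop] fun x => x * log x ^ m := by
  have hlog := eventually_log_zpow_le_two_mul_deriv m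
  refine isBigO_integral_Ioc_of_isBigO_deriv hE
    ((eventually_gt_atTop 1).mono fun t ht => hasDerivAt_mul_log_zpow m ht)
    (hlog.mono fun t ht => by linarith [ht.1, ht.2]) (tendsto_mul_log_zpow_atTop m)
    (hEm.trans (IsBigO.of_bound 2 ?_))
  filter_upwards [hlog] with t ⟨h0, h2⟩
  rw [norm_of_nonneg h0, norm_of_nonneg (by linarith)]
  exact h2

theorem sum_Icc_floor_eq_mul_sub_integral (f : ℕ → ℝ) (x : ℝ) :
    ∑ n ∈ Icc 1 ⌊x⌋₊, f n =
      x * ∑ n ∈ Icc 1 ⌊x⌋₊, f n / n - ∫ t in Set.Ioc 1 x, ∑ n ∈ Icc 1 ⌊t⌋₊, f n / n := by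
  have hIcc (g : ℕ → ℝ) (m : ℕ) (hg : g 0 = 0) : ∑ n ∈ Icc 0 m, g n = ∑ n ∈ Icc 1 m, g n := by
    rw [Icc_eq_cons_Ioc (Nat.zero_le m), sum_cons, hg, zero_add, ← Icc_add_one_left_eq_Ioc,
      zero_add]
  -- `f 0 / 0 = 0`, so the `n = 0` terms in Mathlib's form of Abel summation vanish.
  have abel := sum_mul_eq_sub_integral_mul₀ (fun n => f n / n) (by simp) x (f := id)
    (fun t _ => differentiableAt_id) (by simp)
  simp only [deriv_id, one_mul, id, hIcc (fun n => f n / n) _ (by simp),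
    hIcc (fun n => n * (f n / n)) _ (by simp)] at abel
  rw [← abel]
  refine sum_congr rfl fun n hn => ?_
  rw [mul_div_cancel₀ _ (by have := (mem_Icc.1 hn).1; positivity)]

theorem locallyIntegrableOn_sum_Icc_floor (c : ℕ → ℝ) :
    LocallyIntegrableOn (fun t : ℝ => ∑ n ∈ Icc 1 ⌊t⌋₊, c n) (Set.Ici 1) := by
  simpa using locallyIntegrableOn_mul_sum_Icc c zero_le_one (m := 1)
    (locallyIntegrableOn_const (1 : ℝ) (μ := volume) (s := Set.Ici 1))

theorem sum_Icc_floor_eq_of_hasDerivAt (f : ℕ → ℝ) {H D : ℝ → ℝ} {x : ℝ} (hx : 1 ≤ x)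
    (hH : ∀ t ∈ Set.Icc 1 x, HasDerivAt H (D t) t) (hD : ContinuousOn D (Set.Icc 1 x)) :
    ∑ n ∈ Icc 1 ⌊x⌋₊, f n = x * ∑ n ∈ Icc 1 ⌊x⌋₊, f n / n - (H x - H 1) -
      ∫ t in Set.Ioc 1 x, (∑ n ∈ Icc 1 ⌊t⌋₊, f n / n - D t) := by
  have hS := ((locallyIntegrableOn_sum_Icc_floor (fun n => f n / n)).integrableOn_compact_subset
    Set.Icc_subset_Ici_self isCompact_Icc).mono_set (Set.Ioc_subset_Icc_self (a := 1) (b := x))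
  rw [sum_Icc_floor_eq_mul_sub_integral, ← intervalIntegral.integral_eq_sub_of_hasDerivAt
    (by rwa [Set.uIcc_of_le hx]) (hD.intervalIntegrable_of_Icc hx),
    intervalIntegral.integral_of_le hx,
    integral_sub hS (hD.integrableOn_Icc.mono_set Set.Ioc_subset_Icc_self)]
  ring

theorem sum_Icc_floor_sub_isBigO_mul_log_zpow (f : ℕ → ℝ) {H D : ℝ → ℝ} (m : ℤ)
    (hH : ∀ t ∈ Set.Ici 1, HasDerivAt H (D t) t) (hD : ContinuousOn D (Set.Ici 1))
    (hSD : (fun t => ∑ n ∈ Icc 1 ⌊t⌋₊, f n / n - D t) =O[atTop] fun t => log t ^ m) :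
    (fun x => ∑ n ∈ Icc 1 ⌊x⌋₊, f n - (x * ∑ n ∈ Icc 1 ⌊x⌋₊, f n / n - H x))
      =O[atTop] fun x => x * log x ^ m := by
  have hconst : (fun _ => H 1) =O[atTop] fun x => x * log x ^ m :=
    (isLittleO_const_left.2 (Or.inr (tendsto_abs_atTop_atTop.comp
      (tendsto_mul_log_zpow_atTop m)))).isBigO
  have hSD_int := (locallyIntegrableOn_sum_Icc_floor (fun n => f n / n)).sub
    (hD.locallyIntegrableOn measurableSet_Ici)
  refine (hconst.sub (isBigO_integral_Ioc_mul_log_zpow m hSD_int hSD)).congr' ?_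
    EventuallyEq.rfl
  filter_upwards [eventually_ge_atTop 1] with x hx
  rw [sum_Icc_floor_eq_of_hasDerivAt f hx (fun t ht => hH t ht.1)
    (hD.mono Set.Icc_subset_Ici_self)]
  simp only [Pi.sub_apply]
  ring

theorem sum_from_sum_div_general (k : ℕ) (f : ℕ → ℝ) (a b : ℝ)
    (h : (fun x : ℝ => (∑ n ∈ Finset.Icc 1 ⌊x⌋₊, f n / n) -
          (a * Real.log x ^ k + b * Real.log x ^ (k - 1)))
        =O[atTop] fun x : ℝ => Real.log x ^ ((k : ℤ) - 2)) :
    (fun x : ℝ => (∑ n ∈ Finset.Icc 1 ⌊x⌋₊, f n) -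
        a * (k : ℝ) * x * Real.log x ^ (k - 1))
      =O[atTop] fun x : ℝ => x * Real.log x ^ ((k : ℤ) - 2) := by
  set H : ℝ → ℝ := fun x => a * (x * log x ^ k) + (b - a * k) * (x * log x ^ (k - 1))
  set D : ℝ → ℝ := fun t => a * (log t ^ k + k * log t ^ (k - 1)) +
    (b - a * k) * (log t ^ (k - 1) + (k - 1 : ℕ) * log t ^ (k - 2))
  have hHD (t : ℝ) (ht : t ∈ Set.Ici 1) : HasDerivAt H (D t) t :=
    have ht0 : t ≠ 0 := (zero_lt_one.trans_le ht).ne'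
    ((hasDerivAt_mul_log_pow k ht0).const_mul a).add
      ((hasDerivAt_mul_log_pow (k - 1) ht0).const_mul (b - a * k))
  have hD : ContinuousOn D (Set.Ici 1) := fun t ht => by
    have : t ≠ 0 := (zero_lt_one.trans_le ht).ne'
    exact ContinuousAt.continuousWithinAt (by fun_prop (disch := assumption))
  have hSD : (fun t => ∑ n ∈ Icc 1 ⌊t⌋₊, f n / n - D t) =O[atTop]
      fun t => log t ^ ((k : ℤ) - 2) :=
    (h.sub ((natCast_sub_one_mul_log_pow_isBigO_log_zpow k).const_mul_left (b - a * k)))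
      |>.congr_left fun t => by ring
  refine ((sum_Icc_floor_sub_isBigO_mul_log_zpow f _ hHD hD hSD).add
    ((isBigO_refl (fun x : ℝ => x) atTop).mul h)).congr_left fun x => ?_
  simp only [H]
  ring

/-- If `∑_{n ≤ x} f n / n = a (log x)^k + b (log x)^{k-1}
  + O((log x)^{k-2})`, then `∑_{n ≤ x} f n = a k x (log x)^{k-1} + O(x (log x)^{k-2})`. -/
theorem sum_from_sum_div (k : ℕ) (hk : 1 ≤ k) (f : ℕ → ℝ) (a b : ℝ)
    (h : (fun x : ℝ => (∑ n ∈ Finset.Icc 1 ⌊x⌋₊, f n / n) -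
          (a * Real.log x ^ k + b * Real.log x ^ (k - 1)))
        =O[atTop] fun x : ℝ => Real.log x ^ ((k : ℤ) - 2)) :
    (fun x : ℝ => (∑ n ∈ Finset.Icc 1 ⌊x⌋₊, f n) -
        a * (k : ℝ) * x * Real.log x ^ (k - 1))
      =O[atTop] fun x : ℝ => x * Real.log x ^ ((k : ℤ) - 2) :=
  sum_from_sum_div_general k f a b h
end
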